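/- Let p_i, p_j be two points with |p_i p_j| > 1, and let Q be a finite set of points, all strictly on the right side of the directed line from p_i to p_j, such that all pairwise distances among points of Q ∪ {p_i, p_j} exceed 1. If Q is nonempty, then there exists a point p_l ∈ Q such that the closed disk D(p_i, p_l, p_j) through p_i, p_l, p_j contains no point of Q \ {p_l}. -/

import Mathlib

/-- Signed area / cross product of `b - a` and `x - a`.  A point `x` lies strictly to the
right of the directed line from `a` to `b` iff `cross a b x < 0`. -/
def cross (a b x : EuclideanSpace ℝ (Fin 2)) : ℝ :=
  (b 0 - a 0) * (x 1 - a 1) - (b 1 - a 1) * (x 0 - a 0)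

private lemma keylem (a0 a1 b0 b1 o0 o1 x0 x1 r : ℝ)
    (hE : r^2 = (o0-a0)^2+(o1-a1)^2) (hE' : r^2 = (o0-b0)^2+(o1-b1)^2) :
    ((o0-x0)^2+(o1-x1)^2 - r^2) * ((b0-a0)^2+(b1-a1)^2) =
      ((x0-a0)^2+(x1-a1)^2 - ((b0-a0)*(x0-a0)+(b1-a1)*(x1-a1))) * ((b0-a0)^2+(b1-a1)^2)
        - 2 * (-((o0-a0)*(b1-a1)) + (o1-a1)*(b0-a0)) * ((b0-a0)*(x1-a1) - (b1-a1)*(x0-a0)) := by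
  linear_combination (((b0-a0)*(x0-a0)+(b1-a1)*(x1-a1)) - ((b0-a0)^2+(b1-a1)^2)) * hE
    - ((b0-a0)*(x0-a0)+(b1-a1)*(x1-a1)) * hE'

private lemma dist_sq' (x y : EuclideanSpace ℝ (Fin 2)) :
    dist x y ^ 2 = (x 0 - y 0) ^ 2 + (x 1 - y 1) ^ 2 := by
  rw [EuclideanSpace.dist_eq, Real.sq_sqrt (by positivity)]
  simp [Fin.sum_univ_two, Real.dist_eq, sq_abs]

private lemma div_le_div_neg' {a b c d : ℝ} (hc : c < 0) (hd : d < 0)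
    (h : a / c ≤ b / d) : a * d ≤ b * c := by
  have hcd : 0 < c * d := mul_pos_of_neg_of_neg hc hd
  have h1 := mul_le_mul_of_nonneg_right h hcd.le
  have e1 : a / c * (c * d) = a * d := by field_simp [hc.ne]
  have e2 : b / d * (c * d) = b * c := by field_simp [hd.ne]
  rw [e1, e2] at h1; exact h1

private lemma finallem {Gq Gpl cq cpl S N : ℝ} (hcl : cpl < 0) (hcq : cq < 0)
    (hN : 0 < N) (epl : Gpl * N = 2 * S * cpl)
    (hstrict : Gq * N - 2 * S * cq < 0)
    (hpoly : Gq * (2 * cpl) ≤ Gpl * (2 * cq)) : False := by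
  have e2 : Gpl * N * cq = 2 * S * cpl * cq := by linear_combination cq * epl
  have p1 : 0 < (Gq * N - 2 * S * cq) * cpl := mul_pos_of_neg_of_neg hstrict hcl
  have p2 := mul_le_mul_of_nonneg_right hpoly hN.le
  nlinarith [e2, p1, p2]


/-- Let `|p_i p_j| > 1` and let `Q` be a finite nonempty set of points, all strictly to the
right of the directed line `p_i → p_j`, such that all pairwise distances among points of
`Q ∪ {p_i, p_j}` exceed `1`, with the points in general position (no three collinear,
no four cocircular).  Then there is a point `p_l ∈ Q` such that the closed disk
`D(p_i, p_l, p_j)` (any closed disk whose boundary passes through `p_i, p_l, p_j`)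
contains no point of `Q \ {p_l}`. -/
theorem stmt13 (pi pj : EuclideanSpace ℝ (Fin 2)) (hij : dist pi pj > 1)
    (Q : Set (EuclideanSpace ℝ (Fin 2))) (hQfin : Q.Finite) (hQne : Q.Nonempty)
    (hside : ∀ q ∈ Q, cross pi pj q < 0)
    (hind : ∀ a ∈ insert pi (insert pj Q), ∀ b ∈ insert pi (insert pj Q),
      a ≠ b → dist a b > 1)
    (hcol : ∀ a ∈ insert pi (insert pj Q), ∀ b ∈ insert pi (insert pj Q),
      ∀ c ∈ insert pi (insert pj Q), a ≠ b → b ≠ c → a ≠ c →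
        ¬ Collinear ℝ ({a, b, c} : Set (EuclideanSpace ℝ (Fin 2))))
    (hcirc : ∀ (o : EuclideanSpace ℝ (Fin 2)) (r : ℝ),
      Set.ncard {x ∈ insert pi (insert pj Q) | dist o x = r} ≤ 3) :
    ∃ pl ∈ Q, ∀ (o : EuclideanSpace ℝ (Fin 2)) (r : ℝ),
      dist o pi = r → dist o pl = r → dist o pj = r →
        ∀ q ∈ Q, q ≠ pl → q ∉ Metric.closedBall o r := by
  classical
  obtain ⟨pl, hplQ, hmax⟩ := Set.exists_max_image Q
    (fun x => ((x 0 - pi 0) ^ 2 + (x 1 - pi 1) ^ 2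
        - ((pj 0 - pi 0) * (x 0 - pi 0) + (pj 1 - pi 1) * (x 1 - pi 1)))
      / (2 * cross pi pj x)) hQfin hQne
  refine ⟨pl, hplQ, ?_⟩
  intro o r h1 h2 h3 q hqQ hqne hball
  have hcl : cross pi pj pl < 0 := hside pl hplQ
  have hcq : cross pi pj q < 0 := hside q hqQ
  have hN : (0:ℝ) < (pj 0 - pi 0) ^ 2 + (pj 1 - pi 1) ^ 2 := by
    nlinarith [dist_sq' pi pj, hij]
  have hE : r ^ 2 = (o 0 - pi 0) ^ 2 + (o 1 - pi 1) ^ 2 := by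
    rw [← h1]; exact dist_sq' o pi
  have hE' : r ^ 2 = (o 0 - pj 0) ^ 2 + (o 1 - pj 1) ^ 2 := by
    rw [← h3]; exact dist_sq' o pj
  have key : ∀ x : EuclideanSpace ℝ (Fin 2),
      (dist o x ^ 2 - r ^ 2) * ((pj 0 - pi 0) ^ 2 + (pj 1 - pi 1) ^ 2) =
        ((x 0 - pi 0) ^ 2 + (x 1 - pi 1) ^ 2
          - ((pj 0 - pi 0) * (x 0 - pi 0) + (pj 1 - pi 1) * (x 1 - pi 1)))
          * ((pj 0 - pi 0) ^ 2 + (pj 1 - pi 1) ^ 2)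
          - 2 * (-((o 0 - pi 0) * (pj 1 - pi 1)) + (o 1 - pi 1) * (pj 0 - pi 0))
            * cross pi pj x := by
    intro x
    rw [dist_sq' o x]
    exact keylem (pi 0) (pi 1) (pj 0) (pj 1) (o 0) (o 1) (x 0) (x 1) r hE hE'
  -- epl : on-circle equation for pl
  have epl : ((pl 0 - pi 0) ^ 2 + (pl 1 - pi 1) ^ 2
        - ((pj 0 - pi 0) * (pl 0 - pi 0) + (pj 1 - pi 1) * (pl 1 - pi 1)))
        * ((pj 0 - pi 0) ^ 2 + (pj 1 - pi 1) ^ 2)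
      = 2 * (-((o 0 - pi 0) * (pj 1 - pi 1)) + (o 1 - pi 1) * (pj 0 - pi 0))
          * cross pi pj pl := by
    have hk := key pl
    rw [h2] at hk
    linear_combination -hk
  have hdq : dist o q ≤ r := by
    rw [dist_comm]; exact Metric.mem_closedBall.mp hball
  by_cases hcase : dist o q = r
  · -- cocircular: four points on the circle, contradicting hcirc
    have hij' : pi ≠ pj := by
      intro h; rw [h, dist_self] at hij; linarith
    have cpi : cross pi pj pi = 0 := by unfold cross; ring
    have cpj : cross pi pj pj = 0 := by unfold cross; ring
    have hpipl : pi ≠ pl := by intro h; rw [← h] at hcl; linarith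
    have hpiq : pi ≠ q := by intro h; rw [← h] at hcq; linarith
    have hpjpl : pj ≠ pl := by intro h; rw [← h] at hcl; linarith
    have hpjq : pj ≠ q := by intro h; rw [← h] at hcq; linarith
    have hplq : pl ≠ q := fun h => hqne h.symm
    have hsub : ({pi, pj, pl, q} : Set (EuclideanSpace ℝ (Fin 2)))
        ⊆ {x ∈ insert pi (insert pj Q) | dist o x = r} := by
      rintro x (rfl | rfl | rfl | rfl)
      · exact ⟨by simp, h1⟩
      · exact ⟨by simp, h3⟩
      · exact ⟨by simp [hplQ], h2⟩
      · exact ⟨by simp [hqQ], hcase⟩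
    have hRfin : ({x ∈ insert pi (insert pj Q) | dist o x = r} :
        Set (EuclideanSpace ℝ (Fin 2))).Finite :=
      Set.Finite.subset ((hQfin.insert pj).insert pi) (Set.sep_subset _ _)
    have hcard : ({pi, pj, pl, q} : Set (EuclideanSpace ℝ (Fin 2))).ncard = 4 := by
      rw [Set.ncard_insert_of_notMem (by simp [hij', hpipl, hpiq]),
        Set.ncard_insert_of_notMem (by simp [hpjpl, hpjq]),
        Set.ncard_pair hplq]
    have hle := Set.ncard_le_ncard hsub hRfin
    have := hcirc o r
    omega
  · -- strictly inside: contradicts maximality of pl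
    have hr0 : 0 ≤ r := h1 ▸ dist_nonneg
    have hlt : dist o q ^ 2 < r ^ 2 := by
      have := lt_of_le_of_ne hdq hcase
      nlinarith [dist_nonneg (x := o) (y := q)]
    have hkq := key q
    have hstrict : ((q 0 - pi 0) ^ 2 + (q 1 - pi 1) ^ 2
          - ((pj 0 - pi 0) * (q 0 - pi 0) + (pj 1 - pi 1) * (q 1 - pi 1)))
          * ((pj 0 - pi 0) ^ 2 + (pj 1 - pi 1) ^ 2)
        - 2 * (-((o 0 - pi 0) * (pj 1 - pi 1)) + (o 1 - pi 1) * (pj 0 - pi 0))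
            * cross pi pj q < 0 := by
      rw [← hkq]
      exact mul_neg_of_neg_of_pos (by linarith) hN
    have hmq := hmax q hqQ
    simp only at hmq
    have h2cl : 2 * cross pi pj pl < 0 := by linarith
    have h2cq : 2 * cross pi pj q < 0 := by linarith
    have hpoly := div_le_div_neg' h2cq h2cl hmq
    -- hpoly : Gq * (2*cpl) ≤ Gpl * (2*cq)
    exact finallem hcl hcq hN epl hstrict hpoly
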